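/- arXiv:2509.02703 — 10 statements merged into one kernel-verified Lean document; each statement's English description precedes it below -/
import Mathlib

section
/- For all real parameters η > 0, φ > 0 and every natural number x, the Poisson mixture of the Copoun distribution has the closed form ∫₀^∞ (e^{-λ} λ^x / x!)·(η²/(φ+η))·(1 + φη²λ³/6)·e^{-ηλ} dλ = (η² / ((φ+η)(1+η)^{x+4}))·[(1+η)³ + (φη²/6)(x+1)(x+2)(x+3)]. -/
/-!
Since `e^{-λ} e^{-ηλ} = e^{-(1+η)λ}`, the mixed integrand is a combination of
`λ^x e^{-(1+η)λ}` and `λ^{x+3} e^{-(1+η)λ}`, whose integrals are the Gamma values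
`n!/(1+η)^{n+1}`; the factor `(x+1)(x+2)(x+3)` is `(x+3)!/x!`.
-/

open MeasureTheory Real Set

theorem integrableOn_pow_mul_exp_neg_mul_Ioi (n : ℕ) {r : ℝ} (hr : 0 < r) :
    IntegrableOn (fun t : ℝ => t ^ n * exp (-(r * t))) (Ioi 0) := by
  refine (integrableOn_rpow_mul_exp_neg_mul_rpow (p := 1) (s := n)
    (by linarith [n.cast_nonneg (α := ℝ)]) one_pos hr).congr_fun
      (fun t _ => ?_) measurableSet_Ioi
  simp only [rpow_natCast, rpow_one, neg_mul]

theorem integral_pow_mul_exp_neg_mul_Ioi (n : ℕ) {r : ℝ} (hr : 0 < r) :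
    ∫ t in Ioi 0, t ^ n * exp (-(r * t)) = n.factorial / r ^ (n + 1) := by
  have h := integral_rpow_mul_exp_neg_mul_Ioi (a := n + 1) (by positivity) hr
  rw [add_sub_cancel_right, Gamma_nat_eq_factorial, ← Nat.cast_succ, rpow_natCast] at h
  simp only [rpow_natCast] at h
  rw [h, one_div, inv_pow, div_eq_inv_mul]

theorem poisson_mul_pow_mul_exp_eq (x k : ℕ) (η t : ℝ) :
    exp (-t) * t ^ x / x.factorial * (t ^ k * exp (-η * t))
      = (x.factorial : ℝ)⁻¹ * (t ^ (x + k) * exp (-((1 + η) * t))) := by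
  rw [pow_add, show -((1 + η) * t) = -t + -η * t by ring, exp_add]
  ring

theorem integrableOn_poisson_mul_pow_mul_exp (x k : ℕ) {η : ℝ} (hη : 0 < 1 + η) :
    IntegrableOn (fun t => exp (-t) * t ^ x / x.factorial * (t ^ k * exp (-η * t))) (Ioi 0) := by
  simp_rw [poisson_mul_pow_mul_exp_eq]
  exact (integrableOn_pow_mul_exp_neg_mul_Ioi (x + k) hη).const_mul _

theorem integral_poisson_mul_pow_mul_exp (x k : ℕ) {η : ℝ} (hη : 0 < 1 + η) :
    ∫ t in Ioi 0, exp (-t) * t ^ x / x.factorial * (t ^ k * exp (-η * t))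
      = (x + k).factorial / (x.factorial * (1 + η) ^ (x + k + 1)) := by
  simp_rw [poisson_mul_pow_mul_exp_eq]
  rw [integral_const_mul, integral_pow_mul_exp_neg_mul_Ioi _ hη]
  field_simp

theorem pcd_pmf_closed_form_general (η φ : ℝ) (hη : 0 < η) (x : ℕ) :
    ∫ l in Set.Ioi (0 : ℝ),
      (Real.exp (-l) * l ^ x / (Nat.factorial x : ℝ))
        * ((η ^ 2 / (φ + η)) * (1 + φ * η ^ 2 * l ^ 3 / 6) * Real.exp (-η * l))
      = (η ^ 2 / ((φ + η) * (1 + η) ^ (x + 4)))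
          * ((1 + η) ^ 3
            + (φ * η ^ 2 / 6) * ((x : ℝ) + 1) * ((x : ℝ) + 2) * ((x : ℝ) + 3)) := by
  have hr : 0 < 1 + η := by linarith
  set mix : ℕ → ℝ → ℝ := fun k l =>
    exp (-l) * l ^ x / x.factorial * (l ^ k * exp (-η * l))
  have hsplit : ∀ l : ℝ, (exp (-l) * l ^ x / (x.factorial : ℝ))
        * ((η ^ 2 / (φ + η)) * (1 + φ * η ^ 2 * l ^ 3 / 6) * exp (-η * l))
      = η ^ 2 / (φ + η) * (mix 0 l + φ * η ^ 2 / 6 * mix 3 l) := fun l => by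
    simp only [mix]; ring
  have hfac : ((x + 3).factorial : ℝ) = (x + 1) * (x + 2) * (x + 3) * x.factorial := by
    push_cast [Nat.factorial_succ]; ring
  simp_rw [hsplit]
  rw [integral_const_mul, integral_add (integrableOn_poisson_mul_pow_mul_exp x 0 hr)
    ((integrableOn_poisson_mul_pow_mul_exp x 3 hr).const_mul _), integral_const_mul,
    integral_poisson_mul_pow_mul_exp x 0 hr, integral_poisson_mul_pow_mul_exp x 3 hr,
    Nat.add_zero, hfac]
  field_simp
  ring

/-- The Poisson mixture of the Copoun distribution: closed form of the PCD pmf. -/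
theorem pcd_pmf_closed_form (η φ : ℝ) (hη : 0 < η) (hφ : 0 < φ) (x : ℕ) :
    ∫ l in Set.Ioi (0 : ℝ),
      (Real.exp (-l) * l ^ x / (Nat.factorial x : ℝ))
        * ((η ^ 2 / (φ + η)) * (1 + φ * η ^ 2 * l ^ 3 / 6) * Real.exp (-η * l))
      = (η ^ 2 / ((φ + η) * (1 + η) ^ (x + 4)))
          * ((1 + η) ^ 3
            + (φ * η ^ 2 / 6) * ((x : ℝ) + 1) * ((x : ℝ) + 2) * ((x : ℝ) + 3)) :=
  pcd_pmf_closed_form_general η φ hη x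
end

section
/- For all real parameters η > 0 and φ > 0, the PCD probability mass function sums to one: ∑_{x=0}^∞ (η² / ((φ+η)(1+η)^{x+4}))·[(1+η)³ + (φη²/6)(x+1)(x+2)(x+3)] = 1. -/
theorem Nat.cast_add_three_choose_three {K : Type*} [Field K] [CharZero K] (n : ℕ) :
    ((n + 3).choose 3 : K) = (n + 1) * (n + 2) * (n + 3) / 6 := by
  rw [Nat.cast_choose_eq_ascPochhammer_div]
  simp only [Nat.add_one_sub_one, Nat.reduceSubDiff, Nat.cast_add, Nat.cast_one,
    ascPochhammer_succ_eval, ascPochhammer_one, Polynomial.eval_X, Nat.cast_ofNat, Nat.factorial]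
  ring

/-- The negative binomial distribution with `k + 1` successes and failure probability `r`. -/
theorem hasSum_negBinomial {𝕜 : Type*} [NormedDivisionRing 𝕜] [HasSummableGeomSeries 𝕜]
    (k : ℕ) {r : 𝕜} (hr : ‖r‖ < 1) :
    HasSum (fun n : ℕ ↦ (1 - r) ^ (k + 1) * ((n + k).choose k * r ^ n)) 1 := by
  have hr1 : (1 - r) ^ (k + 1) ≠ 0 :=
    pow_ne_zero _ (sub_ne_zero.2 fun h ↦ by simp [← h] at hr)
  simpa [hr1] using (hasSum_choose_mul_geometric_of_norm_lt_one k hr).mul_left ((1 - r) ^ (k + 1))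

/-- The PCD pmf sums to one. -/
theorem pcd_pmf_sums_to_one (η φ : ℝ) (hη : 0 < η) (hφ : 0 < φ) :
    ∑' x : ℕ, (η ^ 2 / ((φ + η) * (1 + η) ^ (x + 4)))
        * ((1 + η) ^ 3
          + (φ * η ^ 2 / 6) * ((x : ℝ) + 1) * ((x : ℝ) + 2) * ((x : ℝ) + 3)) = 1 := by
  have hr : ‖(1 + η)⁻¹‖ < 1 := by
    rw [Real.norm_of_nonneg (by positivity), inv_lt_one₀ (by positivity)]
    linarith
  have h1r : 1 - (1 + η)⁻¹ = η / (1 + η) := by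
    field_simp; ring
  have hφη : φ + η ≠ 0 := by positivity
  -- the PCD is the mixture, with weights `η / (φ + η)` and `φ / (φ + η)`, of a geometric
  -- and a negative binomial distribution with four successes, both of parameter `η / (1 + η)`
  have hmix := ((hasSum_negBinomial 0 hr).mul_left (η / (φ + η))).add
    ((hasSum_negBinomial 3 hr).mul_left (φ / (φ + η)))
  have hweights : η / (φ + η) * 1 + φ / (φ + η) * 1 = 1 := by
    field_simp; ring
  rw [hweights] at hmix
  refine (hmix.congr_fun fun x ↦ ?_).tsum_eq
  rw [Nat.cast_add_three_choose_three, h1r]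
  simp only [add_zero, zero_add, Nat.choose_zero_right, Nat.cast_one, one_mul, pow_one, inv_pow,
    Nat.reduceAdd]
  field_simp
  ring
end

section
/- For all real parameters η > 0, φ > 0 and every natural number r, the r-th factorial moment of the PCD equals the r-th raw moment of the mixing Copoun distribution: ∑_{x=0}^∞ x(x−1)⋯(x−r+1)·p(x) = (r! / (η^r(φ+η)))·[η + (φ/6)(r+1)(r+2)(r+3)], where x(x−1)⋯(x−r+1) denotes the falling factorial of length r. -/
/-!
Write `x^(k)` for the falling factorial. Since `x^(r)·(x+1)(x+2)(x+3) = (x+3)^(r+3)`, the summand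
splits as `η²/(φ+η)` times
`x^(r)/(1+η)^(x+1) + (φη²/6)·(x+3)^(r+3)/(1+η)^(x+4)`.
Both pieces are factorial moments of the geometric law `n ↦ η/(1+η)^(n+1)`, and the negative
binomial series `∑ C(n+k,k) qⁿ = (1-q)^-(k+1)` gives `∑ n^(k)/(1+η)^(n+1) = k!/η^(k+1)`.
-/

open Finset

theorem prod_range_natCast_sub_eq_descFactorial {R : Type*} [CommRing R] (n k : ℕ) :
    ∏ i ∈ range k, ((n : R) - i) = n.descFactorial k := by
  rw [← descPochhammer_eval_eq_prod_range, descPochhammer_eval_eq_descFactorial]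

theorem Nat.add_descFactorial_add (n s k : ℕ) :
    (n + s).descFactorial (k + s) = (n + s).descFactorial s * n.descFactorial k := by
  simpa [mul_comm] using (descFactorial_mul_descFactorial (n := n + s) (Nat.le_add_left s k)).symm

theorem HasSum.nat_add_of_eq_zero {M : Type*} [AddCommGroup M] [TopologicalSpace M]
    [IsTopologicalAddGroup M] {f : ℕ → M} {a : M} {k : ℕ} (hf : ∀ i < k, f i = 0)
    (h : HasSum f a) : HasSum (fun n ↦ f (n + k)) a := by
  rwa [hasSum_nat_add_iff, sum_eq_zero fun i hi ↦ hf i (mem_range.mp hi), add_zero]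

theorem hasSum_descFactorial_mul_geometric {𝕜 : Type*} [NormedField 𝕜] [CompleteSpace 𝕜]
    {q : 𝕜} (hq : ‖q‖ < 1) (k : ℕ) :
    HasSum (fun n : ℕ ↦ (n.descFactorial k : 𝕜) * q ^ n)
      (k.factorial * q ^ k / (1 - q) ^ (k + 1)) := by
  refine (hasSum_nat_add_iff' k).mp ?_
  rw [sum_eq_zero fun i hi ↦ by simp [Nat.descFactorial_eq_zero_iff_lt.mpr (mem_range.mp hi)],
    sub_zero, ← mul_one_div]
  refine ((hasSum_choose_mul_geometric_of_norm_lt_one k hq).mul_left _).congr_fun fun n ↦ ?_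
  rw [Nat.descFactorial_eq_factorial_mul_choose, pow_add]
  push_cast
  ring

theorem hasSum_descFactorial_div_one_add_pow {η : ℝ} (hη : 0 < η) (k : ℕ) :
    HasSum (fun n : ℕ ↦ (n.descFactorial k : ℝ) / (1 + η) ^ (n + 1))
      (k.factorial / η ^ (k + 1)) := by
  have hq : ‖(1 + η)⁻¹‖ < 1 := by
    rw [norm_inv, Real.norm_of_nonneg (by positivity)]
    exact inv_lt_one_of_one_lt₀ (by linarith)
  have hsum : (k.factorial : ℝ) / η ^ (k + 1)
      = (1 + η)⁻¹ * (k.factorial * (1 + η)⁻¹ ^ k / (1 - (1 + η)⁻¹) ^ (k + 1)) := by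
    rw [show (1 : ℝ) - (1 + η)⁻¹ = η / (1 + η) by field_simp; ring, inv_pow, div_pow]
    field_simp
    ring
  rw [hsum]
  refine ((hasSum_descFactorial_mul_geometric hq k).mul_left _).congr_fun fun n ↦ ?_
  rw [inv_pow]
  field_simp
  ring

/-- The r-th factorial moment of the PCD equals the r-th raw moment of the mixing
Copoun distribution. Here the falling factorial `x(x−1)⋯(x−r+1)` is written as
`∏ i ∈ Finset.range r, ((x : ℝ) - i)`. -/
theorem pcd_factorial_moment (η φ : ℝ) (hη : 0 < η) (hφ : 0 < φ) (r : ℕ) :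
    ∑' x : ℕ, (∏ i ∈ Finset.range r, ((x : ℝ) - (i : ℝ))) *
        ((η ^ 2 / ((φ + η) * (1 + η) ^ (x + 4)))
          * ((1 + η) ^ 3
            + (φ * η ^ 2 / 6) * ((x : ℝ) + 1) * ((x : ℝ) + 2) * ((x : ℝ) + 3)))
      = ((Nat.factorial r : ℝ) / (η ^ r * (φ + η)))
          * (η + (φ / 6) * ((r : ℝ) + 1) * ((r : ℝ) + 2) * ((r : ℝ) + 3)) := by
  have hφη : 0 < φ + η := add_pos hφ hη
  have h₁ := (hasSum_descFactorial_div_one_add_pow hη r).mul_left (η ^ 2 / (φ + η))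
  have h₂ := ((hasSum_descFactorial_div_one_add_pow hη (r + 3)).nat_add_of_eq_zero (k := 3)
    fun i hi ↦ by rw [Nat.descFactorial_eq_zero_iff_lt.mpr (by omega), Nat.cast_zero, zero_div]
    ).mul_left (η ^ 2 / (φ + η) * (φ * η ^ 2 / 6))
  have hdesc3 (x : ℕ) : (x + 3).descFactorial 3 = (x + 1) * (x + 2) * (x + 3) := by
    simp only [Nat.descFactorial_succ, Nat.reduceSubDiff, Nat.add_one_sub_one, tsub_zero,
      Nat.descFactorial_zero, mul_one]
    ring
  refine ((h₁.add h₂).congr_fun fun x ↦ ?_).tsum_eq.trans ?_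
  · rw [prod_range_natCast_sub_eq_descFactorial, Nat.add_descFactorial_add, hdesc3]
    push_cast
    field_simp
    ring
  · rw [Nat.factorial_succ, Nat.factorial_succ, Nat.factorial_succ]
    push_cast
    field_simp
    ring
end

section
/- For all real parameters η > 0 and φ > 0, the mean of the PCD is ∑_{x=0}^∞ x·p(x) = (η+4φ)/(η(φ+η)). -/
theorem Nat.mul_add_choose (n k : ℕ) :
    n * (n + k).choose k = (k + 1) * (n + k).choose (k + 1) := by
  rw [mul_comm (k + 1), Nat.choose_succ_right_eq, Nat.add_sub_cancel, mul_comm]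

theorem hasSum_coe_mul_choose_mul_geometric_of_norm_lt_one {𝕜 : Type*} [NormedField 𝕜] (k : ℕ)
    {r : 𝕜} (hr : ‖r‖ < 1) :
    HasSum (fun n ↦ n * (n + k).choose k * r ^ n) ((k + 1) * r / (1 - r) ^ (k + 2)) := by
  have hr' : 1 - r ≠ 0 := sub_ne_zero.2 (ne_of_apply_ne norm (by simpa using hr.ne'))
  have telescope (n : ℕ) : (n * (n + k).choose k : 𝕜) =
      (k + 1) * ((n + (k + 1)).choose (k + 1) - (n + k).choose k) := by
    rw [← add_assoc, Nat.choose_succ_succ', Nat.cast_add, add_sub_cancel_left]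
    exact_mod_cast congrArg (Nat.cast (R := 𝕜)) (Nat.mul_add_choose n k)
  have h := ((hasSum_choose_mul_geometric_of_norm_lt_one (k + 1) hr).sub
    (hasSum_choose_mul_geometric_of_norm_lt_one k hr)).mul_left ((k : 𝕜) + 1)
  rw [show (k + 1) * r / (1 - r) ^ (k + 2) =
      (k + 1) * (1 / (1 - r) ^ (k + 1 + 1) - 1 / (1 - r) ^ (k + 1)) by field_simp; ring]
  exact h.congr_fun fun n ↦ by rw [telescope]; ring

theorem pcd_mean_summand_eq {η : ℝ} (φ : ℝ) (hη : 1 + η ≠ 0) (x : ℕ) :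
    (x : ℝ) * ((η ^ 2 / ((φ + η) * (1 + η) ^ (x + 4)))
      * ((1 + η) ^ 3 + (φ * η ^ 2 / 6) * ((x : ℝ) + 1) * ((x : ℝ) + 2) * ((x : ℝ) + 3))) =
      η ^ 2 / (φ + η) * (1 + η)⁻¹ * (x * (1 + η)⁻¹ ^ x)
        + φ * η ^ 4 / (φ + η) * (1 + η)⁻¹ ^ 4 * (x * (x + 3).choose 3 * (1 + η)⁻¹ ^ x) := by
  rw [Nat.cast_add_three_choose_three]
  simp only [inv_pow]
  field_simp
  ring

theorem pcd_mean_general (η φ : ℝ) (hη : 0 < η) :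
    ∑' x : ℕ, (x : ℝ) *
        ((η ^ 2 / ((φ + η) * (1 + η) ^ (x + 4)))
          * ((1 + η) ^ 3
            + (φ * η ^ 2 / 6) * ((x : ℝ) + 1) * ((x : ℝ) + 2) * ((x : ℝ) + 3)))
      = (η + 4 * φ) / (η * (φ + η)) := by
  have hr : ‖(1 + η)⁻¹‖ < 1 := by
    rw [norm_inv, Real.norm_of_nonneg (by positivity)]
    exact inv_lt_one_of_one_lt₀ (by linarith)
  have hsum := ((hasSum_coe_mul_geometric_of_norm_lt_one hr).mul_left
      (η ^ 2 / (φ + η) * (1 + η)⁻¹)).add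
    ((hasSum_coe_mul_choose_mul_geometric_of_norm_lt_one 3 hr).mul_left
      (φ * η ^ 4 / (φ + η) * (1 + η)⁻¹ ^ 4))
  rw [tsum_congr (pcd_mean_summand_eq φ (by positivity)), hsum.tsum_eq]
  have h1r : 1 - (1 + η)⁻¹ = η / (1 + η) := by field_simp; ring
  simp only [h1r, div_pow, inv_pow, Nat.cast_ofNat]
  field_simp
  ring

/-- The mean of the PCD. -/
theorem pcd_mean (η φ : ℝ) (hη : 0 < η) (hφ : 0 < φ) :
    ∑' x : ℕ, (x : ℝ) *
        ((η ^ 2 / ((φ + η) * (1 + η) ^ (x + 4)))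
          * ((1 + η) ^ 3
            + (φ * η ^ 2 / 6) * ((x : ℝ) + 1) * ((x : ℝ) + 2) * ((x : ℝ) + 3)))
      = (η + 4 * φ) / (η * (φ + η)) :=
  pcd_mean_general η φ hη
end

section
/- For all real parameters η > 0 and φ > 0, the second raw moment of the PCD is ∑_{x=0}^∞ x²·p(x) = (η² + 2(2φ+1)η + 20φ)/(η²(φ+η)). -/
/-!
With `r = 1 / (1 + η)` the mass function is `c₁ rˣ + c₂ (x + 1)(x + 2)(x + 3) rˣ`, so the second
moment combines `∑ x² rˣ` and `∑ x² (x + 1)(x + 2)(x + 3) rˣ`. Expanding `x²` and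
`x² (x + 1)(x + 2)(x + 3)` in the binomial basis `C(x + k, k)` reduces both series to the negative
binomial series `∑ C(x + k, k) rˣ = (1 - r)^{-(k + 1)}`.
-/

lemma sq_eq_choose_combination (n : ℕ) :
    (n : ℤ) ^ 2 = 2 * (n + 2).choose 2 - 3 * (n + 1).choose 1 + 1 := by
  have h1 := Nat.ascFactorial_eq_factorial_mul_choose n 1
  have h2 := Nat.ascFactorial_eq_factorial_mul_choose n 2
  simp only [Nat.ascFactorial, Nat.factorial] at h1 h2
  zify at h1 h2
  linear_combination h2 - 3 * h1

lemma sq_mul_ascFactorial_three_eq_choose_combination (n : ℕ) :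
    (n : ℤ) ^ 2 * (n + 1) * (n + 2) * (n + 3) =
      120 * (n + 5).choose 5 - 216 * (n + 4).choose 4 + 96 * (n + 3).choose 3 := by
  have h3 := Nat.ascFactorial_eq_factorial_mul_choose n 3
  have h4 := Nat.ascFactorial_eq_factorial_mul_choose n 4
  have h5 := Nat.ascFactorial_eq_factorial_mul_choose n 5
  simp only [Nat.ascFactorial, Nat.factorial] at h3 h4 h5
  zify at h3 h4 h5
  linear_combination h3 * 16 - 9 * h4 + h5

section GeometricMoments

variable {𝕜 : Type*} [NormedField 𝕜] {r : 𝕜}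

lemma one_sub_ne_zero_of_norm_lt_one (hr : ‖r‖ < 1) : 1 - r ≠ 0 := by
  rw [sub_ne_zero]
  rintro rfl
  simp at hr

lemma hasSum_sq_mul_geometric_of_norm_lt_one (hr : ‖r‖ < 1) :
    HasSum (fun n : ℕ ↦ (n : 𝕜) ^ 2 * r ^ n) (r * (1 + r) / (1 - r) ^ 3) := by
  have hsum := (((hasSum_choose_mul_geometric_of_norm_lt_one 2 hr).mul_left 2).sub
    ((hasSum_choose_mul_geometric_of_norm_lt_one 1 hr).mul_left 3)).add
    (hasSum_choose_mul_geometric_of_norm_lt_one 0 hr)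
  have hvalue : r * (1 + r) / (1 - r) ^ 3
      = 2 * (1 / (1 - r) ^ (2 + 1)) - 3 * (1 / (1 - r) ^ (1 + 1)) + 1 / (1 - r) ^ (0 + 1) := by
    have := one_sub_ne_zero_of_norm_lt_one hr
    field_simp
    ring
  rw [hvalue]
  refine hsum.congr_fun fun n ↦ ?_
  have h := congrArg (Int.cast : ℤ → 𝕜) (sq_eq_choose_combination n)
  push_cast at h
  simp only [h, add_zero, Nat.choose_zero_right, Nat.cast_one]
  ring

lemma hasSum_sq_mul_ascFactorial_three_mul_geometric_of_norm_lt_one (hr : ‖r‖ < 1) :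
    HasSum (fun n : ℕ ↦ (n : 𝕜) ^ 2 * (n + 1) * (n + 2) * (n + 3) * r ^ n)
      (24 * r * (1 + 4 * r) / (1 - r) ^ 6) := by
  have hsum := (((hasSum_choose_mul_geometric_of_norm_lt_one 5 hr).mul_left 120).sub
    ((hasSum_choose_mul_geometric_of_norm_lt_one 4 hr).mul_left 216)).add
    ((hasSum_choose_mul_geometric_of_norm_lt_one 3 hr).mul_left 96)
  have hvalue : 24 * r * (1 + 4 * r) / (1 - r) ^ 6
      = 120 * (1 / (1 - r) ^ (5 + 1)) - 216 * (1 / (1 - r) ^ (4 + 1))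
        + 96 * (1 / (1 - r) ^ (3 + 1)) := by
    have := one_sub_ne_zero_of_norm_lt_one hr
    field_simp
    ring
  rw [hvalue]
  refine hsum.congr_fun fun n ↦ ?_
  have h := congrArg (Int.cast : ℤ → 𝕜) (sq_mul_ascFactorial_three_eq_choose_combination n)
  push_cast at h
  rw [h]
  ring

end GeometricMoments

theorem pcd_second_moment_general (η φ : ℝ) (hη : 0 < η) :
    ∑' x : ℕ, (x : ℝ) ^ 2 *
        ((η ^ 2 / ((φ + η) * (1 + η) ^ (x + 4)))
          * ((1 + η) ^ 3
            + (φ * η ^ 2 / 6) * ((x : ℝ) + 1) * ((x : ℝ) + 2) * ((x : ℝ) + 3)))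
      = (η ^ 2 + 2 * (2 * φ + 1) * η + 20 * φ) / (η ^ 2 * (φ + η)) := by
  have h1η : 1 + η ≠ 0 := by positivity
  have hr : ‖(1 + η)⁻¹‖ < 1 := by
    rw [norm_inv, Real.norm_of_nonneg (by positivity)]
    exact inv_lt_one_of_one_lt₀ (by linarith)
  have hsum := ((hasSum_sq_mul_geometric_of_norm_lt_one hr).mul_left
      (η ^ 2 / ((φ + η) * (1 + η)))).add
    ((hasSum_sq_mul_ascFactorial_three_mul_geometric_of_norm_lt_one hr).mul_left
      (φ * η ^ 4 / (6 * (φ + η) * (1 + η) ^ 4)))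
  convert hsum.tsum_eq using 1
  · congr 1
    funext x
    rw [inv_pow]
    field_simp
    ring
  · have hη0 : η ≠ 0 := hη.ne'
    have hcomplement : 1 - (1 + η)⁻¹ = η / (1 + η) := by
      field_simp
      ring
    rw [hcomplement]
    field_simp
    ring

/-- The second raw moment of the PCD. -/
theorem pcd_second_moment (η φ : ℝ) (hη : 0 < η) (hφ : 0 < φ) :
    ∑' x : ℕ, (x : ℝ) ^ 2 *
        ((η ^ 2 / ((φ + η) * (1 + η) ^ (x + 4)))
          * ((1 + η) ^ 3
            + (φ * η ^ 2 / 6) * ((x : ℝ) + 1) * ((x : ℝ) + 2) * ((x : ℝ) + 3)))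
      = (η ^ 2 + 2 * (2 * φ + 1) * η + 20 * φ) / (η ^ 2 * (φ + η)) :=
  pcd_second_moment_general η φ hη
end

section
/- For all real parameters η > 0 and φ > 0, the fourth raw moment of the PCD is ∑_{x=0}^∞ x⁴·p(x) = (η⁴ + 2(2φ+7)η³ + 4(35φ+9)η² + 24(30φ+1)η + 840φ)/(η⁴(φ+η)). -/
/-!
With `q = 1 / (1 + η)`, the PCD is the mixture, with weights `η / (φ + η)` and `φ / (φ + η)`,
of the geometric law `∝ qⁿ` and the negative binomial law `∝ C(n + 3, 3) qⁿ`. Expanding `n⁴` and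
`n⁴ C(n + 3, 3)` in the basis `C(n + k, k)` turns both fourth moments into finite combinations
of the series `∑ C(n + k, k) qⁿ = (1 - q)⁻⁽ᵏ⁺¹⁾`.
-/

open Finset

theorem hasSum_sum_mul_choose_mul_geometric {𝕜 ι : Type*} [NormedField 𝕜] {r : 𝕜}
    (hr : ‖r‖ < 1) (s : Finset ι) (c : ι → 𝕜) (k : ι → ℕ) :
    HasSum (fun n : ℕ => ∑ i ∈ s, c i * (n + k i).choose (k i) * r ^ n)
      (∑ i ∈ s, c i / (1 - r) ^ (k i + 1)) :=
  hasSum_sum fun i _ => by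
    simpa only [mul_assoc, mul_one_div] using
      (hasSum_choose_mul_geometric_of_norm_lt_one (k i) hr).mul_left (c i)

section ChooseExpansion

variable {R : Type*} [CommRing R] (n : ℕ)

/-- The coefficients are `(-1) ^ (4 - k) * k ! * S(5, k + 1)`, with Stirling numbers `S`. -/
theorem cast_pow_four_eq_sum_mul_choose :
    (n : R) ^ 4 = ∑ i : Fin 5, (![1, -15, 50, -60, 24] i : ℤ) * ((n + i).choose i : R) := by
  have hℚ : (n : ℚ) ^ 4 =
      ∑ i : Fin 5, (![1, -15, 50, -60, 24] i : ℤ) * ((n + i).choose i : ℚ) := by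
    simp only [Nat.cast_choose_eq_ascPochhammer_div, Fin.sum_univ_succ]
    simp [ascPochhammer_succ_eval, Nat.factorial]
    ring
  have hℤ : (n : ℤ) ^ 4 =
      ∑ i : Fin 5, (![1, -15, 50, -60, 24] i : ℤ) * ((n + i).choose i : ℤ) := by
    exact_mod_cast hℚ
  simpa using congrArg (Int.cast : ℤ → R) hℤ

theorem cast_pow_four_mul_choose_three_eq_sum_mul_choose :
    (n : R) ^ 4 * (n + 3).choose 3 = ∑ i : Fin 5,
      (![256, -1476, 3020, -2640, 840] i : ℤ) * ((n + (i + 3)).choose (i + 3) : R) := by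
  have hℚ : (n : ℚ) ^ 4 * (n + 3).choose 3 = ∑ i : Fin 5,
      (![256, -1476, 3020, -2640, 840] i : ℤ) * ((n + (i + 3)).choose (i + 3) : ℚ) := by
    simp only [Nat.cast_choose_eq_ascPochhammer_div, Fin.sum_univ_succ]
    simp [ascPochhammer_succ_eval, Nat.factorial]
    ring
  have hℤ : (n : ℤ) ^ 4 * (n + 3).choose 3 = ∑ i : Fin 5,
      (![256, -1476, 3020, -2640, 840] i : ℤ) * ((n + (i + 3)).choose (i + 3) : ℤ) := by
    exact_mod_cast hℚ
  simpa using congrArg (Int.cast : ℤ → R) hℤ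

end ChooseExpansion

section FourthMoments

variable {𝕜 : Type*} [NormedField 𝕜] {r : 𝕜}

theorem hasSum_pow_four_mul_geometric (hr : ‖r‖ < 1) :
    HasSum (fun n : ℕ => (n : 𝕜) ^ 4 * r ^ n)
      (r * (1 + 11 * r + 11 * r ^ 2 + r ^ 3) / (1 - r) ^ 5) := by
  have h1r : 1 - r ≠ 0 := sub_ne_zero.2 fun h => by simp [← h] at hr
  convert hasSum_sum_mul_choose_mul_geometric hr univ _ (fun i : Fin 5 => (i : ℕ)) using 1
  · funext n
    rw [cast_pow_four_eq_sum_mul_choose, sum_mul]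
  · simp [Fin.sum_univ_succ]
    field_simp
    ring

theorem hasSum_pow_four_mul_choose_three_mul_geometric (hr : ‖r‖ < 1) :
    HasSum (fun n : ℕ => (n : 𝕜) ^ 4 * (n + 3).choose 3 * r ^ n)
      (4 * r * (1 + 32 * r + 113 * r ^ 2 + 64 * r ^ 3) / (1 - r) ^ 8) := by
  have h1r : 1 - r ≠ 0 := sub_ne_zero.2 fun h => by simp [← h] at hr
  convert hasSum_sum_mul_choose_mul_geometric hr univ _ (fun i : Fin 5 => (i : ℕ) + 3) using 1
  · funext n
    rw [cast_pow_four_mul_choose_three_eq_sum_mul_choose, sum_mul]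
  · simp [Fin.sum_univ_succ]
    field_simp
    ring

end FourthMoments

theorem pcd_fourth_moment_general (η φ : ℝ) (hη : 0 < η) :
    ∑' x : ℕ, (x : ℝ) ^ 4 *
        ((η ^ 2 / ((φ + η) * (1 + η) ^ (x + 4)))
          * ((1 + η) ^ 3
            + (φ * η ^ 2 / 6) * ((x : ℝ) + 1) * ((x : ℝ) + 2) * ((x : ℝ) + 3)))
      = (η ^ 4 + 2 * (2 * φ + 7) * η ^ 3 + 4 * (35 * φ + 9) * η ^ 2
          + 24 * (30 * φ + 1) * η + 840 * φ) / (η ^ 4 * (φ + η)) := by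
  have hr : ‖(1 + η)⁻¹‖ < 1 := by
    rw [Real.norm_of_nonneg (by positivity)]
    exact inv_lt_one_of_one_lt₀ (by linarith)
  have hpmf (x : ℕ) : (x : ℝ) ^ 4 *
        ((η ^ 2 / ((φ + η) * (1 + η) ^ (x + 4)))
          * ((1 + η) ^ 3
            + (φ * η ^ 2 / 6) * ((x : ℝ) + 1) * ((x : ℝ) + 2) * ((x : ℝ) + 3)))
      = η ^ 2 / ((φ + η) * (1 + η) ^ 4) * ((1 + η) ^ 3 * ((x : ℝ) ^ 4 * (1 + η)⁻¹ ^ x)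
          + φ * η ^ 2 * ((x : ℝ) ^ 4 * (x + 3).choose 3 * (1 + η)⁻¹ ^ x)) := by
    have hchoose : ((x + 3).choose 3 : ℝ) = (x + 1) * (x + 2) * (x + 3) / 6 := by
      simp [Nat.cast_choose_eq_ascPochhammer_div, ascPochhammer_succ_eval, Nat.factorial]
      ring
    rw [hchoose, pow_add, inv_pow]
    field_simp
  have hmoment := (((hasSum_pow_four_mul_geometric hr).mul_left ((1 + η) ^ 3)).add
    ((hasSum_pow_four_mul_choose_three_mul_geometric hr).mul_left (φ * η ^ 2))).mul_left
      (η ^ 2 / ((φ + η) * (1 + η) ^ 4))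
  rw [tsum_congr hpmf, hmoment.tsum_eq]
  have h1r : 1 - (1 + η)⁻¹ = η / (1 + η) := by
    field_simp
    ring
  rw [h1r]
  field_simp
  ring

/-- The fourth raw moment of the PCD. -/
theorem pcd_fourth_moment (η φ : ℝ) (hη : 0 < η) (hφ : 0 < φ) :
    ∑' x : ℕ, (x : ℝ) ^ 4 *
        ((η ^ 2 / ((φ + η) * (1 + η) ^ (x + 4)))
          * ((1 + η) ^ 3
            + (φ * η ^ 2 / 6) * ((x : ℝ) + 1) * ((x : ℝ) + 2) * ((x : ℝ) + 3)))
      = (η ^ 4 + 2 * (2 * φ + 7) * η ^ 3 + 4 * (35 * φ + 9) * η ^ 2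
          + 24 * (30 * φ + 1) * η + 840 * φ) / (η ^ 4 * (φ + η)) :=
  pcd_fourth_moment_general η φ hη
end

section
/- For all real parameters η > 0 and φ > 0, the variance of the PCD satisfies (∑_{x=0}^∞ x²·p(x)) − (∑_{x=0}^∞ x·p(x))² = (η³ + (5φ+1)η² + 2φ(2φ+7)η + 4φ²)/(η²(φ+η)²). -/
/-! The PCD is the mixture, with weights `η / (φ + η)` and `φ / (φ + η)`, of the geometric law and
the negative binomial law of order 4, both with success probability `η / (1 + η)`: with
`r = (1 + η)⁻¹`, `p x` is a combination of `r ^ x` and `(x + 1)(x + 2)(x + 3) r ^ x`. Its moments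
reduce to the series `∑ (n + 1)⋯(n + k) rⁿ = k! / (1 - r) ^ (k + 1)` through the identity
`n (n + 1)⋯(n + k) = (n + 1)⋯(n + k + 1) - (k + 1) (n + 1)⋯(n + k)`, which lowers the power of `n`. -/

section AscFactorialGeometric

open Nat

variable {𝕜 : Type*} [NormedField 𝕜] {r : 𝕜}

theorem natCast_mul_ascFactorial (n k : ℕ) :
    (n : 𝕜) * (n + 1).ascFactorial k
      = (n + 1).ascFactorial (k + 1) - (k + 1) * (n + 1).ascFactorial k := by
  rw [ascFactorial_succ]
  push_cast
  ring

theorem hasSum_ascFactorial_mul_geometric (k : ℕ) (hr : ‖r‖ < 1) :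
    HasSum (fun n : ℕ ↦ ((n + 1).ascFactorial k : 𝕜) * r ^ n) (k ! / (1 - r) ^ (k + 1)) := by
  rw [← mul_one_div]
  refine ((hasSum_choose_mul_geometric_of_norm_lt_one k hr).mul_left (k ! : 𝕜)).congr_fun
    fun n ↦ ?_
  rw [ascFactorial_eq_factorial_mul_choose]
  push_cast
  ring

theorem hasSum_natCast_mul_ascFactorial_mul_geometric (k : ℕ) (hr : ‖r‖ < 1) :
    HasSum (fun n : ℕ ↦ (n : 𝕜) * (n + 1).ascFactorial k * r ^ n)
      ((k + 1)! * r / (1 - r) ^ (k + 2)) := by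
  have h1r : 1 - r ≠ 0 := sub_ne_zero.2 fun h ↦ by simp [← h] at hr
  have hsum : ((k + 1)! * r / (1 - r) ^ (k + 2) : 𝕜)
      = (k + 1)! / (1 - r) ^ (k + 2) - (k + 1) * (k ! / (1 - r) ^ (k + 1)) := by
    rw [factorial_succ]
    push_cast
    field_simp
    ring
  rw [hsum]
  refine ((hasSum_ascFactorial_mul_geometric (k + 1) hr).sub
    ((hasSum_ascFactorial_mul_geometric k hr).mul_left ((k : 𝕜) + 1))).congr_fun fun n ↦ ?_
  linear_combination r ^ n * natCast_mul_ascFactorial (𝕜 := 𝕜) n k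

theorem hasSum_natCast_sq_mul_ascFactorial_mul_geometric (k : ℕ) (hr : ‖r‖ < 1) :
    HasSum (fun n : ℕ ↦ (n : 𝕜) ^ 2 * (n + 1).ascFactorial k * r ^ n)
      ((k + 1)! * r * (1 + (k + 1) * r) / (1 - r) ^ (k + 3)) := by
  have h1r : 1 - r ≠ 0 := sub_ne_zero.2 fun h ↦ by simp [← h] at hr
  have hsum : ((k + 1)! * r * (1 + (k + 1) * r) / (1 - r) ^ (k + 3) : 𝕜)
      = (k + 2)! * r / (1 - r) ^ (k + 3) - (k + 1) * ((k + 1)! * r / (1 - r) ^ (k + 2)) := by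
    rw [factorial_succ (k + 1)]
    push_cast
    field_simp
    ring
  rw [hsum]
  refine ((hasSum_natCast_mul_ascFactorial_mul_geometric (k + 1) hr).sub
    ((hasSum_natCast_mul_ascFactorial_mul_geometric k hr).mul_left ((k : 𝕜) + 1))).congr_fun
    fun n ↦ ?_
  linear_combination (n * r ^ n : 𝕜) * natCast_mul_ascFactorial (𝕜 := 𝕜) n k

end AscFactorialGeometric

noncomputable def pcdPMF (η φ : ℝ) (x : ℕ) : ℝ :=
  η ^ 2 / ((φ + η) * (1 + η) ^ (x + 4))
    * ((1 + η) ^ 3 + (φ * η ^ 2 / 6) * ((x : ℝ) + 1) * ((x : ℝ) + 2) * ((x : ℝ) + 3))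

section PCD

variable {η φ : ℝ}

theorem pcdPMF_eq (hη : 0 < η) (x : ℕ) :
    pcdPMF η φ x = η ^ 2 / ((φ + η) * (1 + η)) * (1 + η)⁻¹ ^ x
      + φ * η ^ 4 / (6 * (φ + η) * (1 + η) ^ 4) * (x + 1).ascFactorial 3 * (1 + η)⁻¹ ^ x := by
  have : (1 + η) ^ x ≠ 0 := by positivity
  simp only [pcdPMF, Nat.ascFactorial_succ, Nat.ascFactorial_zero, inv_pow, pow_add]
  push_cast
  field_simp
  ring

theorem norm_inv_one_add_lt_one (hη : 0 < η) : ‖(1 + η)⁻¹‖ < 1 := by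
  rw [norm_inv, Real.norm_of_nonneg (by positivity)]
  exact inv_lt_one_of_one_lt₀ (by linarith)

theorem one_sub_inv_one_add (hη : 0 < η) : 1 - (1 + η)⁻¹ = η / (1 + η) := by
  field_simp
  ring

theorem hasSum_mul_pcdPMF_of_hasSum (hη : 0 < η) {w : ℕ → ℝ} {a b : ℝ}
    (ha : HasSum (fun n ↦ w n * (1 + η)⁻¹ ^ n) a)
    (hb : HasSum (fun n ↦ w n * (n + 1).ascFactorial 3 * (1 + η)⁻¹ ^ n) b) :
    HasSum (fun x ↦ w x * pcdPMF η φ x)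
      (η ^ 2 / ((φ + η) * (1 + η)) * a + φ * η ^ 4 / (6 * (φ + η) * (1 + η) ^ 4) * b) :=
  ((ha.mul_left _).add (hb.mul_left _)).congr_fun fun x ↦ by
    rw [pcdPMF_eq hη]
    ring

theorem hasSum_mul_pcdPMF (hη : 0 < η) (hφ : 0 < φ) :
    HasSum (fun x : ℕ ↦ x * pcdPMF η φ x) ((η + 4 * φ) / (η * (φ + η))) := by
  have hr := norm_inv_one_add_lt_one hη
  have hgeom := hasSum_natCast_mul_ascFactorial_mul_geometric 0 hr
  simp only [Nat.ascFactorial_zero, Nat.cast_one, mul_one] at hgeom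
  -- not `convert`: it would stop at two defeq but distinct `AddCommMonoid ℝ` instances
  refine (congrArg (HasSum _) ?_).mpr (hasSum_mul_pcdPMF_of_hasSum hη hgeom
    (hasSum_natCast_mul_ascFactorial_mul_geometric 3 hr))
  rw [one_sub_inv_one_add hη]
  norm_num [Nat.factorial]
  field_simp
  ring

theorem hasSum_sq_mul_pcdPMF (hη : 0 < η) (hφ : 0 < φ) :
    HasSum (fun x : ℕ ↦ (x : ℝ) ^ 2 * pcdPMF η φ x)
      ((η * (η + 2) + 4 * φ * (η + 5)) / (η ^ 2 * (φ + η))) := by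
  have hr := norm_inv_one_add_lt_one hη
  have hgeom := hasSum_natCast_sq_mul_ascFactorial_mul_geometric 0 hr
  simp only [Nat.ascFactorial_zero, Nat.cast_one, mul_one] at hgeom
  refine (congrArg (HasSum _) ?_).mpr (hasSum_mul_pcdPMF_of_hasSum hη hgeom
    (hasSum_natCast_sq_mul_ascFactorial_mul_geometric 3 hr))
  rw [one_sub_inv_one_add hη]
  norm_num [Nat.factorial]
  field_simp
  ring

end PCD

/-- The variance of the PCD. -/
theorem pcd_variance (η φ : ℝ) (hη : 0 < η) (hφ : 0 < φ) :
    (∑' x : ℕ, (x : ℝ) ^ 2 *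
        ((η ^ 2 / ((φ + η) * (1 + η) ^ (x + 4)))
          * ((1 + η) ^ 3
            + (φ * η ^ 2 / 6) * ((x : ℝ) + 1) * ((x : ℝ) + 2) * ((x : ℝ) + 3))))
      - (∑' x : ℕ, (x : ℝ) *
        ((η ^ 2 / ((φ + η) * (1 + η) ^ (x + 4)))
          * ((1 + η) ^ 3
            + (φ * η ^ 2 / 6) * ((x : ℝ) + 1) * ((x : ℝ) + 2) * ((x : ℝ) + 3)))) ^ 2
      = (η ^ 3 + (5 * φ + 1) * η ^ 2 + 2 * φ * (2 * φ + 7) * η + 4 * φ ^ 2)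
          / (η ^ 2 * (φ + η) ^ 2) := by
  change (∑' x : ℕ, (x : ℝ) ^ 2 * pcdPMF η φ x) - (∑' x : ℕ, (x : ℝ) * pcdPMF η φ x) ^ 2 = _
  rw [(hasSum_sq_mul_pcdPMF hη hφ).tsum_eq, (hasSum_mul_pcdPMF hη hφ).tsum_eq]
  have : φ + η ≠ 0 := by positivity
  field_simp
  ring
end

section
/- For all real parameters η > 0 and φ > 0, the dispersion index of the PCD, defined as the ratio of the variance (η³ + (5φ+1)η² + 2φ(2φ+7)η + 4φ²)/(η²(φ+η)²) to the mean (η+4φ)/(η(φ+η)), equals 1 + (η² + 14φη + 4φ²)/(η(φ+η)(η+4φ)), and this quantity is strictly greater than 1 (i.e. the PCD is over-dispersed). -/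
/-- The dispersion index of the PCD equals `1 + (η² + 14φη + 4φ²)/(η(φ+η)(η+4φ))`
and is strictly greater than one (over-dispersion). -/
theorem pcd_dispersion_index (η φ : ℝ) (hη : 0 < η) (hφ : 0 < φ) :
    ((η ^ 3 + (5 * φ + 1) * η ^ 2 + 2 * φ * (2 * φ + 7) * η + 4 * φ ^ 2)
        / (η ^ 2 * (φ + η) ^ 2)) / ((η + 4 * φ) / (η * (φ + η)))
      = 1 + (η ^ 2 + 14 * φ * η + 4 * φ ^ 2) / (η * (φ + η) * (η + 4 * φ))
    ∧ 1 < 1 + (η ^ 2 + 14 * φ * η + 4 * φ ^ 2) / (η * (φ + η) * (η + 4 * φ)) := by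
  have hs : 0 < φ + η := by linarith
  have h4 : 0 < η + 4 * φ := by linarith
  constructor
  · field_simp
    ring
  · have hnum : 0 < η ^ 2 + 14 * φ * η + 4 * φ ^ 2 := by positivity
    have hden : 0 < η * (φ + η) * (η + 4 * φ) := by positivity
    linarith [div_pos hnum hden]
end

section
/- For all real parameters η > 0, φ > 0 and every real s with 0 ≤ s < 1, the probability generating function of the PCD is ∑_{x=0}^∞ s^x·p(x) = (η²/(φ+η))·[((η−s+1)³ + φη²)/(η−s+1)⁴]. -/
/-!
The PCD is a mixture, with weights `η / (φ + η)` and `φ / (φ + η)`, of a geometric law and a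
negative binomial law of order 4, both with success probability `η / (1 + η)`; the cubic factor
`(x + 1)(x + 2)(x + 3) / 6` is `(x + 3).choose 3`. Both parts are summed by the negative binomial
series `∑ (n + k).choose k s ^ n / a ^ (n + k + 1) = 1 / (a - s) ^ (k + 1)`.
-/

theorem hasSum_choose_mul_pow_div_pow {𝕜 : Type*} [NormedField 𝕜] {a s : 𝕜} (k : ℕ)
    (hs : ‖s‖ < ‖a‖) :
    HasSum (fun n : ℕ => (n + k).choose k * s ^ n / a ^ (n + k + 1)) (1 / (a - s) ^ (k + 1)) := by
  have ha : a ≠ 0 := norm_pos_iff.mp ((norm_nonneg s).trans_lt hs)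
  have hq : ‖s / a‖ < 1 := by rwa [norm_div, div_lt_one ((norm_nonneg s).trans_lt hs)]
  convert (hasSum_choose_mul_geometric_of_norm_lt_one k hq).div_const (a ^ (k + 1)) using 1
  · ext n
    rw [div_pow, pow_add _ (n + k), pow_add]
    field_simp
    ring
  · rw [one_sub_div ha, div_pow]
    field_simp

theorem pcd_term_eq_mixture {η φ s : ℝ} (hη : 1 + η ≠ 0) (x : ℕ) :
    s ^ x * ((η ^ 2 / ((φ + η) * (1 + η) ^ (x + 4)))
          * ((1 + η) ^ 3
            + (φ * η ^ 2 / 6) * ((x : ℝ) + 1) * ((x : ℝ) + 2) * ((x : ℝ) + 3)))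
      = η ^ 2 / (φ + η) * ((x + 0).choose 0 * s ^ x / (1 + η) ^ (x + 0 + 1)
          + φ * η ^ 2 * ((x + 3).choose 3 * s ^ x / (1 + η) ^ (x + 3 + 1))) := by
  rw [Nat.choose_zero_right, Nat.cast_add_three_choose_three, add_assoc x 3 1, pow_add _ x 4,
    pow_add _ x (0 + 1)]
  field_simp
  ring

theorem pcd_pgf_general (η φ s : ℝ) (hη : 0 < η) (hs0 : 0 ≤ s) (hs1 : s < 1) :
    ∑' x : ℕ, s ^ x *
        ((η ^ 2 / ((φ + η) * (1 + η) ^ (x + 4)))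
          * ((1 + η) ^ 3
            + (φ * η ^ 2 / 6) * ((x : ℝ) + 1) * ((x : ℝ) + 2) * ((x : ℝ) + 3)))
      = (η ^ 2 / (φ + η)) * (((η - s + 1) ^ 3 + φ * η ^ 2) / (η - s + 1) ^ 4) := by
  have hs : ‖s‖ < ‖1 + η‖ := by
    rw [Real.norm_of_nonneg hs0, Real.norm_of_nonneg (by linarith)]; linarith
  have hsum := (((hasSum_choose_mul_pow_div_pow 0 hs).add
    ((hasSum_choose_mul_pow_div_pow 3 hs).mul_left (φ * η ^ 2))).mul_left (η ^ 2 / (φ + η)))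
  simp_rw [← pcd_term_eq_mixture (by linarith : 1 + η ≠ 0)] at hsum
  rw [hsum.tsum_eq]
  have hd : η - s + 1 ≠ 0 := by linarith
  rw [show 1 + η - s = η - s + 1 by ring]
  field_simp
  ring

/-- The probability generating function of the PCD. -/
theorem pcd_pgf (η φ s : ℝ) (hη : 0 < η) (hφ : 0 < φ) (hs0 : 0 ≤ s) (hs1 : s < 1) :
    ∑' x : ℕ, s ^ x *
        ((η ^ 2 / ((φ + η) * (1 + η) ^ (x + 4)))
          * ((1 + η) ^ 3
            + (φ * η ^ 2 / 6) * ((x : ℝ) + 1) * ((x : ℝ) + 2) * ((x : ℝ) + 3)))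
      = (η ^ 2 / (φ + η)) * (((η - s + 1) ^ 3 + φ * η ^ 2) / (η - s + 1) ^ 4) :=
  pcd_pgf_general η φ s hη hs0 hs1
end

section
/- For every fixed real parameter φ > 0, the function h defined on (0, ∞) by h(t) = (√(φ²t² + 14φt + 1) − φt + 1)/(2t) is strictly convex on (0, ∞), and it maps the PCD mean back to η: for every η > 0, h((η+4φ)/(η(φ+η))) = η. -/
/-!
The method-of-moments estimator `h` inverts the mean map
`m(η) = (η + 4φ) / (η (φ + η)) = 1/η + 3φ · (1/η) · 1/(φ + η)`,
which is strictly convex (a strictly convex function plus a product of two nonnegative,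
decreasing, convex functions) and strictly decreasing on `(0, ∞)`. The inverse of a strictly
decreasing, strictly convex function is strictly convex: if `m(u) = x` and `m(v) = y`, then
`m(a u + b v) < a x + b y = m(h(a x + b y))`, so `h(a x + b y) < a u + b v`.
-/

open Set

noncomputable def pcdMean (φ η : ℝ) : ℝ := (η + 4 * φ) / (η * (φ + η))

noncomputable def momEstimator (φ t : ℝ) : ℝ :=
  (√(φ ^ 2 * t ^ 2 + 14 * φ * t + 1) - φ * t + 1) / (2 * t)

theorem StrictConvexOn.strictConvexOn_of_leftInvOn {𝕜 : Type*} [Field 𝕜] [LinearOrder 𝕜]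
    [IsStrictOrderedRing 𝕜] {s t : Set 𝕜} {f g : 𝕜 → 𝕜} (hf : StrictConvexOn 𝕜 s f)
    (hf_anti : StrictAntiOn f s) (ht : Convex 𝕜 t) (hg : MapsTo g t s) (hfg : LeftInvOn f g t) :
    StrictConvexOn 𝕜 t g := by
  refine ⟨ht, fun x hx y hy hxy a b ha hb hab => ?_⟩
  have hz := ht hx hy ha.le hb.le hab
  have hne : g x ≠ g y := fun h => hxy (by rw [← hfg hx, ← hfg hy, h])
  have key := hf.2 (hg hx) (hg hy) hne ha hb hab
  rw [hfg hx, hfg hy, ← hfg hz] at key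
  exact (hf_anti.lt_iff_gt (hf.1 (hg hx) (hg hy) ha.le hb.le hab) (hg hz)).1 key

section
variable {φ : ℝ}

lemma pcdMean_eq_inv_add (hφ : 0 ≤ φ) {η : ℝ} (hη : 0 < η) :
    pcdMean φ η = η⁻¹ + 3 * φ * (η⁻¹ * (φ + η)⁻¹) := by
  have : φ + η ≠ 0 := by positivity
  rw [pcdMean]
  field_simp
  ring

lemma pcdMean_pos (hφ : 0 ≤ φ) {η : ℝ} (hη : 0 < η) : 0 < pcdMean φ η := by
  unfold pcdMean; positivity

lemma strictAntiOn_pcdMean (hφ : 0 ≤ φ) : StrictAntiOn (pcdMean φ) (Ioi 0) := by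
  intro x (hx : 0 < x) y (hy : 0 < y) hxy
  rw [pcdMean_eq_inv_add hφ hx, pcdMean_eq_inv_add hφ hy]
  exact add_lt_add_of_lt_of_le (inv_strictAntiOn hx hy hxy) (by gcongr)

lemma strictConvexOn_pcdMean (hφ : 0 ≤ φ) : StrictConvexOn ℝ (Ioi 0) (pcdMean φ) := by
  have hinv : StrictConvexOn ℝ (Ioi 0) fun η : ℝ => η⁻¹ := by
    simpa using strictConvexOn_zpow (m := -1) (by norm_num) (by norm_num)
  have hshift : ConvexOn ℝ (Ioi 0) fun η : ℝ => (φ + η)⁻¹ :=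
    (hinv.convexOn.translate_right φ).subset (fun η (hη : 0 < η) => show 0 < φ + η by positivity)
      (convex_Ioi 0)
  have hprod : ConvexOn ℝ (Ioi 0) fun η : ℝ => η⁻¹ * (φ + η)⁻¹ :=
    hinv.convexOn.mul hshift (fun η (hη : 0 < η) => by positivity)
      (fun η (hη : 0 < η) => by positivity)
      (inv_strictAntiOn.antitoneOn.monovaryOn
        fun x (hx : 0 < x) y (hy : 0 < y) hxy => by gcongr)
  refine (hinv.add_convexOn (hprod.smul (by positivity : 0 ≤ 3 * φ))).congr ?_
  intro η hη
  exact (pcdMean_eq_inv_add hφ hη).symm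

lemma momEstimator_pos (hφ : 0 ≤ φ) {t : ℝ} (ht : 0 < t) : 0 < momEstimator φ t := by
  have hsqrt : φ * t + 1 ≤ √(φ ^ 2 * t ^ 2 + 14 * φ * t + 1) :=
    Real.le_sqrt_of_sq_le (by nlinarith [mul_nonneg hφ ht.le])
  unfold momEstimator
  exact div_pos (by linarith) (by positivity)

lemma pcdMean_momEstimator (hφ : 0 ≤ φ) {t : ℝ} (ht : 0 < t) :
    pcdMean φ (momEstimator φ t) = t := by
  set u := momEstimator φ t with hu_def
  set s := √(φ ^ 2 * t ^ 2 + 14 * φ * t + 1)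
  have hu_pos : 0 < u := momEstimator_pos hφ ht
  have hs : s ^ 2 = φ ^ 2 * t ^ 2 + 14 * φ * t + 1 := Real.sq_sqrt (by positivity)
  have hu : 2 * t * u = s - φ * t + 1 := by
    rw [hu_def, momEstimator, mul_div_cancel₀ _ (by positivity)]
  rw [pcdMean, div_eq_iff (by positivity)]
  refine mul_left_cancel₀ (show 4 * t ≠ 0 by positivity) ?_
  -- `u` is the positive root of `t u² + (φ t - 1) u - 4 φ = 0`, whose discriminant is `s²`.
  linear_combination (2 - 2 * φ * t - 2 * t * u - (s - φ * t + 1)) * hu - hs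

lemma momEstimator_pcdMean (hφ : 0 ≤ φ) {η : ℝ} (hη : 0 < η) :
    momEstimator φ (pcdMean φ η) = η :=
  (strictAntiOn_pcdMean hφ).injOn (momEstimator_pos hφ (pcdMean_pos hφ hη)) hη
    (pcdMean_momEstimator hφ (pcdMean_pos hφ hη))

lemma strictConvexOn_momEstimator (hφ : 0 ≤ φ) : StrictConvexOn ℝ (Ioi 0) (momEstimator φ) :=
  (strictConvexOn_pcdMean hφ).strictConvexOn_of_leftInvOn (strictAntiOn_pcdMean hφ) (convex_Ioi 0)
    (fun _ ht => momEstimator_pos hφ ht) (fun _ ht => pcdMean_momEstimator hφ ht)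

end

/-- For fixed `φ > 0`, the function `h(t) = (√(φ²t² + 14φt + 1) − φt + 1)/(2t)` is
strictly convex on `(0, ∞)` and maps the PCD mean back to `η`. -/
theorem mom_estimator_strictly_convex_and_inverts_mean (φ : ℝ) (hφ : 0 < φ) :
    StrictConvexOn ℝ (Set.Ioi (0 : ℝ))
      (fun t : ℝ => (Real.sqrt (φ ^ 2 * t ^ 2 + 14 * φ * t + 1) - φ * t + 1) / (2 * t))
    ∧ ∀ η : ℝ, 0 < η →
      (Real.sqrt (φ ^ 2 * ((η + 4 * φ) / (η * (φ + η))) ^ 2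
            + 14 * φ * ((η + 4 * φ) / (η * (φ + η))) + 1)
          - φ * ((η + 4 * φ) / (η * (φ + η))) + 1)
        / (2 * ((η + 4 * φ) / (η * (φ + η)))) = η :=
  ⟨strictConvexOn_momEstimator hφ.le, fun _ hη => momEstimator_pcdMean hφ.le hη⟩
end
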